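/- arXiv:1405.4472 — 3 statements merged into one kernel-verified Lean document; each statement's English description precedes it below -/
import Mathlib

section
/- Average noise sensitivity of compressive maps: let X be uniform on {0,1}^t, ε > 0, and f a randomized mapping from {0,1}^t to {0,1}^{εt}. Then the expectation over uniform j ∈ [t] of d(f(X|_{j←0}), f(X|_{j←1})) is at most √(2 ln 2 · ε). -/
/-!
Let `P` be the law of `f(X)` and `P_{j,b}` that of `f(X|_{j←b})`. Going through `P` with the
triangle inequality and applying Pinsker's inequality bounds `d(P_{j,0}, P_{j,1})` by
`∑_b √(D(P_{j,b} ‖ P) / 2)`, and by Cauchy–Schwarz the sum over `j` is at most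
`√(t ∑_{j,b} D(P_{j,b} ‖ P))`. Now `½ ∑_b D(P_{j,b} ‖ P) = I(X_j; f(X))`, and since the coordinates
of `X` are independent, `∑_j I(X_j; f(X)) ≤ I(X; f(X)) ≤ log |W| ≤ ε t log 2`; this superadditivity
is Gibbs' inequality for the joint law of `(X, f(X))` against `P(z) ∏_j P_{j,X_j}(z) / P(z)`.
-/

open Finset

/-- Statistical distance: half the ℓ1-distance of probability mass functions. -/
noncomputable def statDist {Ω : Type*} [Fintype Ω] (p q : Ω → ℝ) : ℝ :=
  (1 / 2) * ∑ ω, |p ω - q ω|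

/-- The distribution of `f(X|_{j←b})`, where `X` is uniform on `{0,1}^t`, the
`j`-th coordinate is fixed to `b`, and `f` is a randomized mapping with uniform
seed in `R`. -/
noncomputable def fixDist {W R : Type*} [Fintype W] [Fintype R] [DecidableEq W] {t : ℕ}
    (f : (Fin t → Bool) → R → W) (j : Fin t) (b : Bool) (z : W) : ℝ :=
  ∑ a : Fin t → Bool, ∑ r,
    ((1 : ℝ) / 2) ^ t * (1 / (Fintype.card R : ℝ)) *
      (if f (Function.update a j b) r = z then 1 else 0)

open Real InformationTheory

lemma le_of_sub_mul_deriv_nonneg {f f' : ℝ → ℝ} {c x : ℝ} (hc : 0 ≤ c) (hx : 0 ≤ x)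
    (hf : ContinuousOn f (Set.Ici 0)) (hf' : ∀ y, 0 < y → HasDerivAt f (f' y) y)
    (hsign : ∀ y, 0 < y → 0 ≤ (y - c) * f' y) : f c ≤ f x := by
  rcases le_total x c with hxc | hcx
  · refine antitoneOn_of_deriv_nonpos (convex_Icc 0 c) (hf.mono Set.Icc_subset_Ici_self)
      (fun y hy => ?_) (fun y hy => ?_) ⟨hx, hxc⟩ ⟨hc, le_rfl⟩ hxc <;>
      rw [interior_Icc] at hy
    · exact (hf' y hy.1).differentiableAt.differentiableWithinAt
    · rw [(hf' y hy.1).deriv]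
      exact nonpos_of_mul_nonneg_right (hsign y hy.1) (by linarith [hy.2])
  · refine monotoneOn_of_deriv_nonneg (convex_Ici c) (hf.mono (Set.Ici_subset_Ici.2 hc))
      (fun y hy => ?_) (fun y hy => ?_) Set.self_mem_Ici hcx hcx <;>
      rw [interior_Ici] at hy
    · exact (hf' y (hc.trans_lt hy)).differentiableAt.differentiableWithinAt
    · rw [(hf' y (hc.trans_lt hy)).deriv]
      exact nonneg_of_mul_nonneg_right (hsign y (hc.trans_lt hy)) (by linarith [hy.out])

lemma sub_one_mul_add_one_mul_log_sub_nonneg {x : ℝ} (hx : 0 < x) :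
    0 ≤ (x - 1) * ((x + 1) * log x - 2 * (x - 1)) := by
  set g : ℝ → ℝ := fun y => (y + 1) * log y - 2 * (y - 1)
  have hg' : ∀ y, 0 < y → HasDerivAt g (log y + y⁻¹ - 1) y := fun y hy => by
    have := (((hasDerivAt_id y).add_const 1).mul (hasDerivAt_log hy.ne')).sub
      (((hasDerivAt_id y).sub_const 1).const_mul 2)
    exact this.congr_deriv (by simp only [id]; field_simp; ring)
  have hmono : MonotoneOn g (Set.Ioi 0) := by
    refine monotoneOn_of_deriv_nonneg (convex_Ioi 0)
      (fun y hy => (hg' y hy).continuousAt.continuousWithinAt) (fun y hy => ?_) (fun y hy => ?_) <;>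
      rw [interior_Ioi] at hy
    · exact (hg' y hy).differentiableAt.differentiableWithinAt
    · have := log_le_sub_one_of_pos (inv_pos.2 hy)
      rw [log_inv] at this
      rw [(hg' y hy).deriv]
      linarith
  have hg1 : g 1 = 0 := by simp [g]
  rcases le_total x 1 with hx1 | hx1
  · exact mul_nonneg_of_nonpos_of_nonpos (by linarith)
      (hg1 ▸ hmono hx (Set.mem_Ioi.2 one_pos) hx1)
  · exact mul_nonneg (by linarith) (hg1 ▸ hmono (Set.mem_Ioi.2 one_pos) hx hx1)

lemma three_mul_sq_sub_one_le_klFun {x : ℝ} (hx : 0 ≤ x) :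
    3 * (x - 1) ^ 2 ≤ 2 * (x + 2) * klFun x := by
  set g : ℝ → ℝ := fun y => 2 * (y + 2) * klFun y - 3 * (y - 1) ^ 2
  have hg' : ∀ y, 0 < y → HasDerivAt g (4 * ((y + 1) * log y - 2 * (y - 1))) y := fun y hy => by
    have := ((((hasDerivAt_id y).add_const 2).const_mul 2).mul (hasDerivAt_klFun hy.ne')).sub
      ((((hasDerivAt_id y).sub_const 1).pow 2).const_mul 3)
    exact this.congr_deriv (by simp only [klFun_apply, id]; ring)
  have := le_of_sub_mul_deriv_nonneg zero_le_one hx (by fun_prop) hg' fun y hy => by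
    nlinarith [sub_one_mul_add_one_mul_log_sub_nonneg hy]
  simp only [g, klFun_one] at this
  linarith

lemma mul_klFun_div {p q : ℝ} (hq : q ≠ 0) : q * klFun (p / q) = p * log (p / q) + q - p := by
  rw [klFun_apply]
  field_simp

lemma sub_le_mul_log_div {p q : ℝ} (hp : 0 ≤ p) (hq : 0 ≤ q) (hpq : q = 0 → p = 0) :
    p - q ≤ p * log (p / q) := by
  rcases hq.eq_or_lt with rfl | hq
  · simp [hpq rfl]
  · have := mul_nonneg hq.le (klFun_nonneg (div_nonneg hp hq.le))
    rw [mul_klFun_div hq.ne'] at this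
    linarith

lemma three_mul_sq_sub_le_mul_log_div {p q : ℝ} (hp : 0 ≤ p) (hq : 0 ≤ q) (hpq : q = 0 → p = 0) :
    3 * (p - q) ^ 2 ≤ 2 * (p + 2 * q) * (p * log (p / q) + q - p) := by
  rcases hq.eq_or_lt with rfl | hq
  · simp [hpq rfl]
  · rw [← mul_klFun_div hq.ne']
    calc 3 * (p - q) ^ 2 = q ^ 2 * (3 * (p / q - 1) ^ 2) := by field_simp
      _ ≤ q ^ 2 * (2 * (p / q + 2) * klFun (p / q)) :=
        mul_le_mul_of_nonneg_left (three_mul_sq_sub_one_le_klFun (div_nonneg hp hq.le))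
          (sq_nonneg q)
      _ = 2 * (p + 2 * q) * (q * klFun (p / q)) := by field_simp

noncomputable def discreteKL {Ω : Type*} [Fintype Ω] (p q : Ω → ℝ) : ℝ :=
  ∑ ω, p ω * log (p ω / q ω)

section Divergences

variable {Ω : Type*} [Fintype Ω] {p q : Ω → ℝ}

lemma statDist_le_add (p r m : Ω → ℝ) : statDist p r ≤ statDist p m + statDist r m := by
  unfold statDist
  rw [← mul_add, ← sum_add_distrib]
  gcongr with ω
  exact (abs_sub_le _ (m ω) _).trans_eq (by rw [abs_sub_comm (m ω)])

lemma discreteKL_nonneg (hp : ∀ ω, 0 ≤ p ω) (hq : ∀ ω, 0 ≤ q ω)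
    (hpq : ∀ ω, q ω = 0 → p ω = 0) (hsum : ∑ ω, q ω ≤ ∑ ω, p ω) : 0 ≤ discreteKL p q := by
  have := sum_le_sum fun ω (_ : ω ∈ univ) => sub_le_mul_log_div (hp ω) (hq ω) (hpq ω)
  rw [sum_sub_distrib] at this
  exact (sub_nonneg.2 hsum).trans this

theorem statDist_le_sqrt_discreteKL (hp : ∀ ω, 0 ≤ p ω) (hq : ∀ ω, 0 ≤ q ω)
    (hpq : ∀ ω, q ω = 0 → p ω = 0) (hp1 : ∑ ω, p ω = 1) (hq1 : ∑ ω, q ω = 1) :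
    statDist p q ≤ √(discreteKL p q / 2) := by
  -- Cauchy–Schwarz with weights `p + 2 q`, which sum to `3`
  have hcs : (∑ ω, |p ω - q ω|) ^ 2 ≤
      (∑ ω, (p ω + 2 * q ω)) * ∑ ω, 2 / 3 * (p ω * log (p ω / q ω) + q ω - p ω) :=
    sum_sq_le_sum_mul_sum_of_sq_le_mul _ (fun ω _ => by linarith [hp ω, hq ω])
      (fun ω _ => by linarith [sub_le_mul_log_div (hp ω) (hq ω) (hpq ω)])
      fun ω _ => by
        nlinarith [sq_abs (p ω - q ω), three_mul_sq_sub_le_mul_log_div (hp ω) (hq ω) (hpq ω)]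
  simp only [← mul_sum, sum_add_distrib, sum_sub_distrib, hp1, hq1] at hcs
  refine le_sqrt_of_sq_le ?_
  rw [statDist, discreteKL]
  linarith

lemma neg_sum_mul_log_le_log_card [Nonempty Ω] (hp : ∀ ω, 0 ≤ p ω) (hp1 : ∑ ω, p ω = 1) :
    -∑ ω, p ω * log (p ω) ≤ log (Fintype.card Ω) := by
  have hc : (0 : ℝ) < Fintype.card Ω := by exact_mod_cast Fintype.card_pos
  -- Gibbs' inequality against the uniform distribution
  have := discreteKL_nonneg (q := fun _ => (Fintype.card Ω : ℝ)⁻¹) hp (fun _ => by positivity)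
    (fun _ h => absurd h (by positivity)) (by simp [hp1, hc.ne'])
  have hsplit : ∀ ω, p ω * log (p ω / (Fintype.card Ω : ℝ)⁻¹) =
      p ω * log (p ω) + p ω * log (Fintype.card Ω) := fun ω => by
    rcases (hp ω).eq_or_lt with h | h
    · simp [← h]
    · rw [div_inv_eq_mul, log_mul h.ne' hc.ne', mul_add]
  simp only [discreteKL, hsplit, sum_add_distrib, ← sum_mul, hp1, one_mul] at this
  linarith

end Divergences

lemma sum_sqrt_le_sqrt_card_mul_sum {ι : Type*} [Fintype ι] {g : ι → ℝ} (hg : ∀ i, 0 ≤ g i) :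
    ∑ i, √(g i) ≤ √(Fintype.card ι * ∑ i, g i) := by
  refine le_sqrt_of_sq_le ?_
  simpa using sum_sq_le_sum_mul_sum_of_sq_le_mul univ (f := 1) (fun _ _ => zero_le_one)
    (fun i _ => hg i) fun i _ => by simp [sq_sqrt (hg i)]

theorem Fintype.sum_sum_update {ι M : Type*} [Fintype ι] [DecidableEq ι] {β : ι → Type*}
    [∀ i, Fintype (β i)] [AddCommMonoid M] (j : ι) (K : (∀ i, β i) → M) :
    ∑ a, ∑ b : β j, K (Function.update a j b) = Fintype.card (β j) • ∑ a, K a := by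
  -- `(a, b) ↦ (update a j b, a j)` is an involution
  let e : Equiv.Perm ((∀ i, β i) × β j) :=
    Function.Involutive.toPerm (fun p => (Function.update p.1 j p.2, p.1 j)) fun p => by simp
  calc ∑ a, ∑ b : β j, K (Function.update a j b) = ∑ p, K (e p).1 :=
        (Fintype.sum_prod_type' fun a b => K (Function.update a j b)).symm
    _ = ∑ p : (∀ i, β i) × β j, K p.1 := Equiv.sum_comp e fun p => K p.1
    _ = Fintype.card (β j) • ∑ a, K a := by simp [Fintype.sum_prod_type, smul_sum]

section Cube

variable {W : Type*} {t : ℕ}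

-- A randomized map is modelled by the kernel `q`, `q a` being the law of its output on input `a`.
-- For `X` uniform on the cube, `uniformMix q` is the law of the output on `X`, `fixedMix q j b`
-- its law on `X|_{j←b}`, and `mutualInfo q` is `I(X; output)` in nats.
noncomputable def uniformMix (q : (Fin t → Bool) → W → ℝ) (z : W) : ℝ :=
  ∑ a, (1 / 2 : ℝ) ^ t * q a z

noncomputable def fixedMix (q : (Fin t → Bool) → W → ℝ) (j : Fin t) (b : Bool) (z : W) : ℝ :=
  ∑ a, (1 / 2 : ℝ) ^ t * q (Function.update a j b) z

noncomputable def mutualInfo [Fintype W] (q : (Fin t → Bool) → W → ℝ) : ℝ :=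
  ∑ a, (1 / 2 : ℝ) ^ t * discreteKL (q a) (uniformMix q)

variable {q : (Fin t → Bool) → W → ℝ}

lemma sum_fixedMix_bool (j : Fin t) (z : W) : ∑ b, fixedMix q j b z = 2 * uniformMix q z := by
  simpa [fixedMix, uniformMix, sum_comm (γ := Bool)] using
    Fintype.sum_sum_update j fun a => (1 / 2 : ℝ) ^ t * q a z

lemma weight_mul_le_uniformMix (hq : ∀ a z, 0 ≤ q a z) (a : Fin t → Bool) (z : W) :
    (1 / 2 : ℝ) ^ t * q a z ≤ uniformMix q z :=
  single_le_sum (f := fun a => (1 / 2 : ℝ) ^ t * q a z)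
    (fun a _ => mul_nonneg (by positivity) (hq a z)) (mem_univ a)

lemma weight_mul_le_fixedMix (hq : ∀ a z, 0 ≤ q a z) (j : Fin t) (a : Fin t → Bool) (z : W) :
    (1 / 2 : ℝ) ^ t * q a z ≤ fixedMix q j (a j) z := by
  have := single_le_sum (f := fun a' => (1 / 2 : ℝ) ^ t * q (Function.update a' j (a j)) z)
    (fun a _ => mul_nonneg (by positivity) (hq _ z)) (mem_univ a)
  simpa [fixedMix] using this

lemma fixedMix_nonneg (hq : ∀ a z, 0 ≤ q a z) (j : Fin t) (b : Bool) (z : W) :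
    0 ≤ fixedMix q j b z :=
  sum_nonneg fun a _ => mul_nonneg (by positivity) (hq _ z)

lemma uniformMix_nonneg (hq : ∀ a z, 0 ≤ q a z) (z : W) : 0 ≤ uniformMix q z :=
  sum_nonneg fun a _ => mul_nonneg (by positivity) (hq a z)

lemma fixedMix_eq_zero (hq : ∀ a z, 0 ≤ q a z) {z : W} (hz : uniformMix q z = 0) (j : Fin t)
    (b : Bool) : fixedMix q j b z = 0 := by
  have := sum_fixedMix_bool (q := q) j z
  rw [hz, Fintype.sum_bool] at this
  cases b <;> linarith [fixedMix_nonneg hq j true z, fixedMix_nonneg hq j false z]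

lemma sum_uniformMix [Fintype W] (hq : ∀ a, ∑ z, q a z = 1) : ∑ z, uniformMix q z = 1 := by
  simp [uniformMix, sum_comm (γ := W), ← mul_sum, hq]

lemma sum_fixedMix [Fintype W] (hq : ∀ a, ∑ z, q a z = 1) (j : Fin t) (b : Bool) :
    ∑ z, fixedMix q j b z = 1 := by
  simp [fixedMix, sum_comm (γ := W), ← mul_sum, hq]

lemma sum_discreteKL_fixedMix [Fintype W] (j : Fin t) :
    ∑ b, discreteKL (fixedMix q j b) (uniformMix q) =
      2 * ∑ z, ∑ a, (1 / 2 : ℝ) ^ t * q a z * log (fixedMix q j (a j) z / uniformMix q z) := by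
  simp only [discreteKL]
  rw [mul_sum, sum_comm]
  refine sum_congr rfl fun z _ => ?_
  have := Fintype.sum_sum_update j fun a =>
    (1 / 2 : ℝ) ^ t * q a z * log (fixedMix q j (a j) z / uniformMix q z)
  simp only [Function.update_self, Fintype.card_bool, nsmul_eq_mul, Nat.cast_ofNat] at this
  rw [← this, sum_comm]
  simp only [fixedMix, sum_mul]

lemma sum_weight_mul_prod_fixedMix_div {z : W} (hz : uniformMix q z ≠ 0) :
    ∑ a : Fin t → Bool, (1 / 2 : ℝ) ^ t *
      (uniformMix q z * ∏ j, fixedMix q j (a j) z / uniformMix q z) = uniformMix q z := by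
  have hsum : ∀ j, ∑ b, fixedMix q j b z / uniformMix q z = 2 := fun j => by
    rw [← sum_div, sum_fixedMix_bool, mul_div_assoc, div_self hz, mul_one]
  rw [← mul_sum, ← mul_sum, ← Fintype.prod_sum fun j b => fixedMix q j b z / uniformMix q z]
  simp only [hsum, prod_const, card_univ, Fintype.card_fin]
  rw [mul_left_comm, ← mul_pow]
  norm_num

lemma sum_mul_sum_log_fixedMix_le (hq : ∀ a z, 0 ≤ q a z) (z : W) :
    ∑ a, (1 / 2 : ℝ) ^ t * q a z * ∑ j, log (fixedMix q j (a j) z / uniformMix q z) ≤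
      ∑ a, (1 / 2 : ℝ) ^ t * q a z * log (q a z / uniformMix q z) := by
  set P := uniformMix q z with hPdef
  rcases (show 0 ≤ P from uniformMix_nonneg hq z).eq_or_lt with hP | hP
  · have hq0 : ∀ a, q a z = 0 := fun a => by
      have := weight_mul_le_uniformMix hq a z
      rw [← hPdef, ← hP] at this
      exact le_antisymm (nonpos_of_mul_nonpos_right this (by positivity)) (hq a z)
    simp [hq0]
  -- Gibbs' inequality for `(1/2)^t q · z` against `(1/2)^t r`, both of total mass `P`
  set r : (Fin t → Bool) → ℝ := fun a => P * ∏ j, fixedMix q j (a j) z / P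
  have hmass : ∑ a, (1 / 2 : ℝ) ^ t * (q a z - r a) = 0 := by
    have := sum_weight_mul_prod_fixedMix_div (q := q) hP.ne'
    rw [← hPdef] at this
    simp only [mul_sub, sum_sub_distrib, r, this]
    exact sub_self _
  have hterm : ∀ a, (1 / 2 : ℝ) ^ t * q a z * ∑ j, log (fixedMix q j (a j) z / P) +
      (1 / 2 : ℝ) ^ t * (q a z - r a) ≤ (1 / 2 : ℝ) ^ t * q a z * log (q a z / P) := fun a => by
    rcases (hq a z).eq_or_lt with hqa | hqa
    · have : 0 ≤ r a :=
        mul_nonneg hP.le (prod_nonneg fun j _ => div_nonneg (fixedMix_nonneg hq _ _ _) hP.le)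
      rw [← hqa]
      simp only [zero_mul, mul_zero, zero_add, zero_sub, mul_neg]
      exact neg_nonpos.2 (by positivity)
    have hρ : ∀ j, 0 < fixedMix q j (a j) z / P := fun j =>
      div_pos ((by positivity : (0 : ℝ) < _).trans_le (weight_mul_le_fixedMix hq j a z)) hP
    have hr : 0 < r a := mul_pos hP (prod_pos fun j _ => hρ j)
    have hgibbs := sub_le_mul_log_div hqa.le hr.le fun h => absurd h hr.ne'
    rw [div_mul_eq_div_div, log_div (by positivity) (prod_pos fun j _ => hρ j).ne',
      log_prod fun j _ => (hρ j).ne'] at hgibbs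
    calc _ = (1 / 2 : ℝ) ^ t * (q a z - r a + q a z * ∑ j, log (fixedMix q j (a j) z / P)) := by
          ring
      _ ≤ (1 / 2 : ℝ) ^ t * (q a z * log (q a z / P)) := by gcongr; linarith
      _ = _ := by ring
  have := sum_le_sum fun a (_ : a ∈ univ) => hterm a
  rw [sum_add_distrib, hmass] at this
  linarith

theorem sum_discreteKL_fixedMix_le_two_mul_mutualInfo [Fintype W] (hq : ∀ a z, 0 ≤ q a z) :
    ∑ j, ∑ b, discreteKL (fixedMix q j b) (uniformMix q) ≤ 2 * mutualInfo q := by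
  simp only [sum_discreteKL_fixedMix, ← mul_sum]
  gcongr
  calc ∑ j, ∑ z, ∑ a, (1 / 2 : ℝ) ^ t * q a z * log (fixedMix q j (a j) z / uniformMix q z)
      = ∑ z, ∑ a, (1 / 2 : ℝ) ^ t * q a z * ∑ j, log (fixedMix q j (a j) z / uniformMix q z) := by
        simp only [mul_sum]
        rw [sum_comm]
        exact sum_congr rfl fun z _ => sum_comm
    _ ≤ ∑ z, ∑ a, (1 / 2 : ℝ) ^ t * q a z * log (q a z / uniformMix q z) :=
        sum_le_sum fun z _ => sum_mul_sum_log_fixedMix_le hq z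
    _ = mutualInfo q := by
        simp only [mutualInfo, discreteKL, mul_sum, mul_assoc]
        exact sum_comm

theorem mutualInfo_le_log_card [Fintype W] [Nonempty W] (hq0 : ∀ a z, 0 ≤ q a z)
    (hq1 : ∀ a, ∑ z, q a z = 1) : mutualInfo q ≤ log (Fintype.card W) := by
  have hle : ∀ a z, q a z * log (q a z / uniformMix q z) ≤ -(q a z * log (uniformMix q z)) :=
    fun a z => by
      rcases (hq0 a z).eq_or_lt with h | h
      · simp [← h]
      have hP : 0 < uniformMix q z :=
        (mul_pos (by positivity) h).trans_le (weight_mul_le_uniformMix hq0 a z)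
      have := mul_log_nonpos (hq0 a z) (hq1 a ▸ single_le_sum (fun z _ => hq0 a z) (mem_univ z))
      rw [log_div h.ne' hP.ne', mul_sub]
      linarith
  calc mutualInfo q ≤ ∑ a, (1 / 2 : ℝ) ^ t * ∑ z, -(q a z * log (uniformMix q z)) := by
        unfold mutualInfo discreteKL
        gcongr with a _ z _
        exact hle a z
    _ = -∑ z, uniformMix q z * log (uniformMix q z) := by
        simp only [uniformMix, sum_mul, mul_sum, sum_neg_distrib, mul_neg, mul_assoc]
        rw [sum_comm]
    _ ≤ log (Fintype.card W) :=
        neg_sum_mul_log_le_log_card (uniformMix_nonneg hq0) (sum_uniformMix hq1)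

lemma statDist_fixedMix_le [Fintype W] (hq0 : ∀ a z, 0 ≤ q a z) (hq1 : ∀ a, ∑ z, q a z = 1)
    (j : Fin t) : statDist (fixedMix q j false) (fixedMix q j true) ≤
      ∑ b, √(discreteKL (fixedMix q j b) (uniformMix q) / 2) := by
  have hpinsker : ∀ b, statDist (fixedMix q j b) (uniformMix q) ≤
      √(discreteKL (fixedMix q j b) (uniformMix q) / 2) := fun b =>
    statDist_le_sqrt_discreteKL (fixedMix_nonneg hq0 j b) (uniformMix_nonneg hq0)
      (fun z hz => fixedMix_eq_zero hq0 hz j b) (sum_fixedMix hq1 j b) (sum_uniformMix hq1)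
  rw [Fintype.sum_bool, add_comm]
  exact (statDist_le_add _ _ _).trans (add_le_add (hpinsker false) (hpinsker true))

theorem sum_statDist_fixedMix_le_sqrt [Fintype W] (hq0 : ∀ a z, 0 ≤ q a z)
    (hq1 : ∀ a, ∑ z, q a z = 1) :
    ∑ j, statDist (fixedMix q j false) (fixedMix q j true) ≤ √(2 * t * mutualInfo q) := by
  set D : Fin t → Bool → ℝ := fun j b => discreteKL (fixedMix q j b) (uniformMix q)
  have hD : ∀ j b, 0 ≤ D j b := fun j b =>
    discreteKL_nonneg (fixedMix_nonneg hq0 j b) (uniformMix_nonneg hq0)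
      (fun z hz => fixedMix_eq_zero hq0 hz j b) (by rw [sum_fixedMix hq1, sum_uniformMix hq1])
  calc ∑ j, statDist (fixedMix q j false) (fixedMix q j true)
      ≤ ∑ j, ∑ b, √(D j b / 2) := sum_le_sum fun j _ => statDist_fixedMix_le hq0 hq1 j
    _ ≤ ∑ j, √(∑ b, D j b) := sum_le_sum fun j _ =>
        (sum_sqrt_le_sqrt_card_mul_sum fun b => div_nonneg (hD j b) two_pos.le).trans_eq <| by
          rw [Fintype.card_bool, ← sum_div, Nat.cast_ofNat, mul_div_cancel₀ _ two_ne_zero]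
    _ ≤ √(t * ∑ j, ∑ b, D j b) := by
        simpa using sum_sqrt_le_sqrt_card_mul_sum fun j => sum_nonneg fun b (_ : b ∈ univ) => hD j b
    _ ≤ √(2 * t * mutualInfo q) := sqrt_le_sqrt <| by
        nlinarith [sum_discreteKL_fixedMix_le_two_mul_mutualInfo hq0,
          (Nat.cast_nonneg t : (0 : ℝ) ≤ t)]

end Cube

section Seed

variable {W R : Type*} [Fintype R] [DecidableEq W] {t : ℕ}

noncomputable def seedKernel (f : (Fin t → Bool) → R → W) (a : Fin t → Bool) (z : W) : ℝ :=
  ∑ r, 1 / (Fintype.card R : ℝ) * if f a r = z then 1 else 0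

lemma seedKernel_nonneg (f : (Fin t → Bool) → R → W) (a : Fin t → Bool) (z : W) :
    0 ≤ seedKernel f a z :=
  sum_nonneg fun r _ => by positivity

lemma sum_seedKernel [Fintype W] [Nonempty R] (f : (Fin t → Bool) → R → W) (a : Fin t → Bool) :
    ∑ z, seedKernel f a z = 1 := by
  simp [seedKernel, sum_comm (γ := W)]

lemma fixDist_eq_fixedMix [Fintype W] (f : (Fin t → Bool) → R → W) :
    fixDist f = fixedMix (seedKernel f) := by
  ext j b z
  simp [fixDist, fixedMix, seedKernel, mul_sum]

end Seed

theorem avg_noise_sensitivity_general {W R : Type*} [Fintype W] [Fintype R] [DecidableEq W]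
    [Nonempty R] (t : ℕ) (ε : ℝ)
    (f : (Fin t → Bool) → R → W)
    (hW : (Fintype.card W : ℝ) ≤ 2 ^ (ε * t)) :
    (1 / t : ℝ) * ∑ j : Fin t, statDist (fixDist f j false) (fixDist f j true)
      ≤ Real.sqrt (2 * Real.log 2 * ε) := by
  have : Nonempty W := ⟨f (fun _ => false) (Classical.arbitrary R)⟩
  have hI := mutualInfo_le_log_card (seedKernel_nonneg f) (sum_seedKernel f)
  have hlog : log (Fintype.card W) ≤ ε * t * log 2 :=
    (log_le_log (by exact_mod_cast Fintype.card_pos) hW).trans_eq (log_rpow two_pos _)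
  rw [fixDist_eq_fixedMix, one_div]
  refine inv_mul_le_of_le_mul₀ (Nat.cast_nonneg t) (sqrt_nonneg _) ?_
  calc _ ≤ √(2 * t * mutualInfo (seedKernel f)) :=
        sum_statDist_fixedMix_le_sqrt (seedKernel_nonneg f) (sum_seedKernel f)
    _ ≤ √((t : ℝ) ^ 2 * (2 * log 2 * ε)) := sqrt_le_sqrt <| by
        nlinarith [mul_le_mul_of_nonneg_left (hI.trans hlog) (Nat.cast_nonneg (α := ℝ) t)]
    _ = t * √(2 * log 2 * ε) := by rw [sqrt_mul (sq_nonneg _), sqrt_sq (Nat.cast_nonneg t)]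

/-- Average noise sensitivity of compressive maps.  If `f` is a
randomized mapping from `{0,1}^t` to a range with at most `2^{εt}` elements,
then `E_{j∼U([t])} d(f(X|_{j←0}), f(X|_{j←1})) ≤ √(2 ln 2 · ε)`. -/
theorem avg_noise_sensitivity {W R : Type*} [Fintype W] [Fintype R] [DecidableEq W]
    [Nonempty R] (t : ℕ) (ht : 0 < t) (ε : ℝ) (hε : 0 < ε)
    (f : (Fin t → Bool) → R → W)
    (hW : (Fintype.card W : ℝ) ≤ 2 ^ (ε * t)) :
    (1 / t : ℝ) * ∑ j : Fin t, statDist (fixDist f j false) (fixDist f j true)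
      ≤ Real.sqrt (2 * Real.log 2 * ε) :=
  avg_noise_sensitivity_general t ε f hW
end

section
/- Vajda-type inequality: for probability distributions P and Q on a finite set, d(P,Q) ≤ 1 − exp(−1 − D_KL(P || Q)), where D_KL is in bits. -/
/-- Kullback–Leibler divergence in bits: `∑_ω P(ω) log₂(P(ω)/Q(ω))`. -/
noncomputable def klDiv {Ω : Type*} [Fintype Ω] (p q : Ω → ℝ) : ℝ :=
  ∑ ω, if p ω = 0 then 0 else p ω * Real.logb 2 (p ω / q ω)

/-!
Write `1 - d(P,Q) = ∑ min(P,Q)` and let `L = ∑ P ln(P/Q)` be the divergence in nats, taken over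
the support `A` of `P`. Splitting `ln(P/Q) = ln(P/min) - ln(Q/min)`, Jensen's inequality for `ln`
with weights `P` bounds the first part below by `-ln ∑_A min(P,Q)`, and `ln x ≤ x - 1` bounds
the second part by `∑_A (Q - min(P,Q)) ≤ 1`. Hence `exp(-1 - L) ≤ ∑ min(P,Q) = 1 - d(P,Q)`;
finally `D_KL = L / ln 2 ≥ L` because `L ≥ 0` (Gibbs).
-/

open Real Finset

theorem neg_log_sum_le_sum_mul_log_div {ι : Type*} {s : Finset ι} {w x : ι → ℝ}
    (hw : ∀ i ∈ s, 0 < w i) (hx : ∀ i ∈ s, 0 < x i)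
    (hw1 : ∑ i ∈ s, w i = 1) :
    -log (∑ i ∈ s, x i) ≤ ∑ i ∈ s, w i * log (w i / x i) := by
  have jensen := strictConcaveOn_log_Ioi.concaveOn.le_map_sum (t := s) (p := fun i => x i / w i)
    (fun i hi => (hw i hi).le) hw1 (fun i hi => div_pos (hx i hi) (hw i hi))
  have hsum : ∑ i ∈ s, w i • (x i / w i) = ∑ i ∈ s, x i :=
    sum_congr rfl fun i hi => mul_div_cancel₀ _ (hw i hi).ne'
  have hlog : ∀ i ∈ s, w i * log (w i / x i) = -(w i • log (x i / w i)) := fun i _ => by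
    rw [smul_eq_mul, ← inv_div, log_inv, mul_neg]
  rw [sum_congr rfl hlog, sum_neg_distrib, neg_le_neg_iff, ← hsum]
  exact jensen

theorem mul_log_div_min_le {a b : ℝ} (ha : 0 < a) (hb : 0 < b) :
    a * log (b / min a b) ≤ b - min a b := by
  rcases le_total a b with hab | hba
  · rw [min_eq_left hab]
    have := mul_le_mul_of_nonneg_left (log_le_sub_one_of_pos (div_pos hb ha)) ha.le
    rwa [mul_sub, mul_div_cancel₀ _ ha.ne', mul_one] at this
  · simp [min_eq_right hba]

theorem exp_neg_one_sub_sum_mul_log_div_le_sum_min {ι : Type*} {s : Finset ι} {p q : ι → ℝ}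
    (hp : ∀ i ∈ s, 0 < p i) (hq : ∀ i ∈ s, 0 < q i)
    (hp1 : ∑ i ∈ s, p i = 1) (hq1 : ∑ i ∈ s, q i ≤ 1) :
    exp (-1 - ∑ i ∈ s, p i * log (p i / q i)) ≤ ∑ i ∈ s, min (p i) (q i) := by
  have hm : ∀ i ∈ s, 0 < min (p i) (q i) := fun i hi => lt_min (hp i hi) (hq i hi)
  have hsplit : ∀ i ∈ s, p i * log (p i / q i) =
      p i * log (p i / min (p i) (q i)) - p i * log (q i / min (p i) (q i)) := fun i hi => by
    rw [log_div (hp i hi).ne' (hq i hi).ne', log_div (hp i hi).ne' (hm i hi).ne',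
      log_div (hq i hi).ne' (hm i hi).ne']
    ring
  have hjensen := neg_log_sum_le_sum_mul_log_div hp hm hp1
  have hexcess : ∑ i ∈ s, p i * log (q i / min (p i) (q i)) ≤ 1 :=
    calc ∑ i ∈ s, p i * log (q i / min (p i) (q i))
        ≤ ∑ i ∈ s, (q i - min (p i) (q i)) :=
          sum_le_sum fun i hi => mul_log_div_min_le (hp i hi) (hq i hi)
      _ ≤ ∑ i ∈ s, q i := sum_le_sum fun i hi => sub_le_self _ (hm i hi).le
      _ ≤ 1 := hq1
  rw [sum_congr rfl hsplit, sum_sub_distrib]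
  calc exp (-1 - (∑ i ∈ s, p i * log (p i / min (p i) (q i))
          - ∑ i ∈ s, p i * log (q i / min (p i) (q i))))
      ≤ exp (log (∑ i ∈ s, min (p i) (q i))) := exp_le_exp.mpr (by linarith)
    _ = ∑ i ∈ s, min (p i) (q i) := exp_log (sum_pos hm (nonempty_of_sum_ne_zero (hp1 ▸ one_ne_zero)))

section Distributions

variable {Ω : Type*} [Fintype Ω]

theorem statDist_eq_one_sub_sum_min {p q : Ω → ℝ} (hp1 : ∑ ω, p ω = 1) (hq1 : ∑ ω, q ω = 1) :
    statDist p q = 1 - ∑ ω, min (p ω) (q ω) := by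
  have habs : ∀ ω, |p ω - q ω| = p ω + q ω - 2 * min (p ω) (q ω) := fun ω => by
    rw [← max_sub_min_eq_abs', ← min_add_max (p ω) (q ω)]
    ring
  rw [statDist, sum_congr rfl fun ω _ => habs ω, sum_sub_distrib, sum_add_distrib, hp1, hq1,
    ← mul_sum]
  ring

theorem klDiv_eq_sum_support_div_log_two [DecidableEq Ω] (p q : Ω → ℝ) :
    klDiv p q = (∑ ω with p ω ≠ 0, p ω * log (p ω / q ω)) / log 2 := by
  rw [sum_div, sum_filter, klDiv]
  refine sum_congr rfl fun ω _ => ?_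
  split_ifs <;> simp [logb, mul_div_assoc, *]

end Distributions

/-- Vajda-type inequality: `d(P,Q) ≤ 1 − exp(−1 − D_KL(P‖Q))`,
with `D_KL` in bits and `exp` the natural exponential.  (When `P` is not
absolutely continuous w.r.t. `Q`, the divergence is `+∞` and the inequality is
vacuous, so we assume absolute continuity.) -/
theorem vajda_inequality {Ω : Type*} [Fintype Ω] (p q : Ω → ℝ)
    (hp : ∀ ω, 0 ≤ p ω) (hq : ∀ ω, 0 ≤ q ω)
    (hp1 : ∑ ω, p ω = 1) (hq1 : ∑ ω, q ω = 1)
    (habs : ∀ ω, q ω = 0 → p ω = 0) :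
    statDist p q ≤ 1 - Real.exp (-1 - klDiv p q) := by
  classical
  set A : Finset Ω := {ω | p ω ≠ 0}
  set L := ∑ ω ∈ A, p ω * log (p ω / q ω)
  have hpA : ∀ ω ∈ A, 0 < p ω := fun ω hω => (hp ω).lt_of_ne' (mem_filter.mp hω).2
  have hqA : ∀ ω ∈ A, 0 < q ω := fun ω hω =>
    (hq ω).lt_of_ne' fun h => (mem_filter.mp hω).2 (habs ω h)
  have hp1A : ∑ ω ∈ A, p ω = 1 := by rw [sum_filter_ne_zero, hp1]
  have hq1A : ∑ ω ∈ A, q ω ≤ 1 :=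
    hq1 ▸ sum_le_sum_of_subset_of_nonneg (filter_subset _ _) fun ω _ _ => hq ω
  have hGibbs : 0 ≤ L := by
    have := neg_log_sum_le_sum_mul_log_div hpA hqA hp1A
    have := log_nonpos (sum_nonneg fun ω _ => hq ω) hq1A
    linarith
  have hLD : L ≤ klDiv p q := by
    rw [klDiv_eq_sum_support_div_log_two]
    exact le_div_self hGibbs (log_pos one_lt_two) (by linarith [log_two_lt_d9])
  rw [statDist_eq_one_sub_sum_min hp1 hq1, sub_le_sub_iff_left]
  calc rexp (-1 - klDiv p q)
      ≤ rexp (-1 - L) := exp_le_exp.mpr (by linarith)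
    _ ≤ ∑ ω ∈ A, min (p ω) (q ω) := exp_neg_one_sub_sum_mul_log_div_le_sum_min hpA hqA hp1A hq1A
    _ ≤ ∑ ω, min (p ω) (q ω) :=
      sum_le_sum_of_subset_of_nonneg (filter_subset _ _) fun ω _ _ => le_min (hp ω) (hq ω)
end

section
/- Greedy step for hypergraph tournaments: let S: binom(V,t) → V be a hypergraph tournament on a finite set V and let R ⊆ V with |R| ≥ t. Then there exists g ∈ binom(R, t−1) such that g dominates at least a 1/t fraction of the elements of R, i.e., |{v ∈ R : v ∈ g or S(g∪{v}) = v}| ≥ |R|/t. -/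
open Finset

/-!
Deleting the winner `S e` from a `t`-set `e ⊆ R` gives a `(t-1)`-set `g ⊆ R` together with a
vertex `v ∉ g` that wins `g ∪ {v}`, and `e ↦ (e \ {S e}, S e)` is a bijection onto such pairs.
So, summed over `g ∈ binom(R, t-1)`, the number of outside vertices winning against `g` is
`binom(n, t)`, where `n = |R|`. As `t · binom(n, t) = (n - t + 1) · binom(n, t-1)`, some `g` has at
least `(n - t + 1) / t` such vertices; adding the `t - 1` elements of `g` gives at least `n / t`.
-/

section

variable {V : Type*} [DecidableEq V]

theorem sum_card_filter_insert_eq_card_powersetCard {k : ℕ} (S : Finset V → V) (R : Finset V)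
    (hS : ∀ e ∈ R.powersetCard (k + 1), S e ∈ e) :
    ∑ g ∈ R.powersetCard k, #{v ∈ R \ g | S (insert v g) = v} = #(R.powersetCard (k + 1)) := by
  rw [← card_sigma]
  refine card_nbij' (fun p => insert p.2 p.1) (fun e => ⟨e.erase (S e), S e⟩) ?_ ?_ ?_ ?_
  · rintro ⟨g, v⟩ h
    simp only [mem_coe, mem_sigma, mem_powersetCard, mem_filter, mem_sdiff] at h ⊢
    obtain ⟨⟨hgR, hg⟩, ⟨hvR, hvg⟩, -⟩ := h
    exact ⟨insert_subset hvR hgR, by rw [card_insert_of_notMem hvg, hg]⟩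
  · intro e he
    have hSe := hS e he
    rw [mem_coe, mem_powersetCard] at he
    simp only [mem_coe, mem_sigma, mem_powersetCard, mem_filter, mem_sdiff, insert_erase hSe,
      and_true]
    exact ⟨⟨(erase_subset _ _).trans he.1, by rw [card_erase_of_mem hSe, he.2]; rfl⟩,
      ⟨he.1 hSe, notMem_erase _ _⟩⟩
  · rintro ⟨g, v⟩ h
    simp only [mem_coe, mem_sigma, mem_filter, mem_sdiff] at h
    obtain ⟨-, ⟨-, hvg⟩, hv⟩ := h
    simp only [hv, erase_insert hvg]
  · intro e he
    exact insert_erase (hS e he)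

theorem exists_card_sub_le_mul_card_filter_insert {k : ℕ} (S : Finset V → V) (R : Finset V)
    (hk : k ≤ #R) (hS : ∀ e ∈ R.powersetCard (k + 1), S e ∈ e) :
    ∃ g ∈ R.powersetCard k, #R - k ≤ (k + 1) * #{v ∈ R \ g | S (insert v g) = v} := by
  refine exists_le_of_sum_le (powersetCard_nonempty.2 hk) ?_
  calc ∑ _ ∈ R.powersetCard k, (#R - k)
      = (#R).choose k * (#R - k) := by rw [sum_const, card_powersetCard, smul_eq_mul]
    _ = (k + 1) * ∑ g ∈ R.powersetCard k, #{v ∈ R \ g | S (insert v g) = v} := by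
      rw [sum_card_filter_insert_eq_card_powersetCard S R hS, card_powersetCard,
        ← Nat.choose_succ_right_eq, mul_comm]
    _ ≤ _ := (mul_sum _ _ _).le

theorem filter_mem_or_eq_union {g R : Finset V} (hg : g ⊆ R) (p : V → Prop) [DecidablePred p] :
    {v ∈ R | v ∈ g ∨ p v} = g ∪ {v ∈ R \ g | p v} := by
  ext v
  have := @hg v
  simp only [mem_filter, mem_union, mem_sdiff]
  tauto

end

/-- Greedy step for hypergraph tournaments.  If `S` selects an
element of every `t`-element subset and `R` has at least `t` elements, then some
`(t−1)`-element subset `g ⊆ R` dominates at least a `1/t` fraction of `R`. -/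
theorem hypergraph_tournament_greedy_step {V : Type*} [DecidableEq V]
    (t : ℕ) (ht : 1 ≤ t)
    (S : Finset V → V) (R : Finset V) (hR : t ≤ R.card)
    (hS : ∀ e : Finset V, e ⊆ R → e.card = t → S e ∈ e) :
    ∃ g ⊆ R, g.card = t - 1 ∧
      (R.card : ℝ) / t ≤ (R.filter fun v => v ∈ g ∨ S (insert v g) = v).card := by
  obtain ⟨k, rfl⟩ : ∃ k, t = k + 1 := ⟨t - 1, by omega⟩
  obtain ⟨g, hg, hwin⟩ := exists_card_sub_le_mul_card_filter_insert S R (by omega)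
    fun e he => hS e (mem_powersetCard.1 he).1 (mem_powersetCard.1 he).2
  rw [mem_powersetCard] at hg
  refine ⟨g, hg.1, hg.2, ?_⟩
  set w := #{v ∈ R \ g | S (insert v g) = v}
  have hwin' : (#R : ℝ) ≤ k + (k + 1) * w := by exact_mod_cast (by omega : #R ≤ k + (k + 1) * w)
  rw [filter_mem_or_eq_union hg.1,
    card_union_of_disjoint (disjoint_sdiff.mono_right (filter_subset _ _)), hg.2,
    div_le_iff₀ (by positivity)]
  push_cast
  nlinarith
end
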